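/- arXiv:2310.08568 — 3 statements merged into one kernel-verified Lean document; each statement's English description precedes it below -/
import Mathlib

section
/- Let S be a finite set of j products, each with a nonnegative price r_i, and let φ be a choice model satisfying weak rationality (φ(i, A) ≥ φ(i, A ∪ {x}) for all i ∈ A, x ∉ A). Let S^r be a random multiset of j products sampled independently and uniformly with replacement from S, and let R(A) = Σ_{i∈A} r_i φ(i,A) denote expected revenue. Then E[R(S^r)] ≥ (1 - (1-1/j)^j) · R(S) ≥ (1 - 1/e) · R(S). -/
open Finset

/-- Expected revenue of an assortment. -/
noncomputable def revenue {N : Type} [DecidableEq N]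
    (r : N → ℝ) (φ : N → Finset N → ℝ) (A : Finset N) : ℝ :=
  ∑ i ∈ A, r i * φ i A

/-!
A sampled assortment `T ⊆ S` keeps, by weak rationality, at least the choice probability each of its
products has in `S`, so `R(T) ≥ ∑_{i ∈ T} r_i φ(i, S)`. Summing over all `j ^ j` samples, a fixed
`i ∈ S` is missed by exactly `(j - 1) ^ j` of them, which produces the factor `1 - (1 - 1/j) ^ j`;
and `(1 - 1/j) ^ j ≤ e⁻¹`.
-/

def WeaklyRational {N α : Type*} [DecidableEq N] [Preorder α] (φ : N → Finset N → α) : Prop :=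
  ∀ (A : Finset N) (i x : N), i ∈ A → x ∉ A → φ i (insert x A) ≤ φ i A

theorem WeaklyRational.apply_le_of_subset {N α : Type*} [DecidableEq N] [Preorder α]
    {φ : N → Finset N → α} (hφ : WeaklyRational φ) {i : N} {T S : Finset N}
    (hi : i ∈ T) (hTS : T ⊆ S) : φ i S ≤ φ i T := by
  suffices ∀ C : Finset N, φ i (T ∪ C) ≤ φ i T by
    simpa [union_eq_right.mpr hTS] using this S
  intro C
  induction C using Finset.induction_on with
  | empty => simp
  | insert x C _ ih =>
    rw [union_insert]
    by_cases hx : x ∈ T ∪ C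
    · rwa [insert_eq_of_mem hx]
    · exact (hφ _ i x (mem_union_left C hi) hx).trans ih

section Sampling

variable {α β : Type*} [Fintype α] [DecidableEq α] [Fintype β] [DecidableEq β]

open Fintype

theorem card_filter_mem_image_univ (b : β) :
    #{f : α → β | b ∈ univ.image f} = card β ^ card α - (card β - 1) ^ card α := by
  have hmiss : ({f : α → β | b ∉ univ.image f} : Finset _) = piFinset fun _ => univ.erase b := by
    ext f
    simp [mem_piFinset]
  have hcard_miss : #(piFinset fun _ : α => univ.erase b) = (card β - 1) ^ card α := by
    simp [card_erase_of_mem]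
  refine Nat.eq_sub_of_add_eq ?_
  rw [← hcard_miss, ← hmiss, card_filter_add_card_filter_not, card_univ, card_fun]

theorem sum_fun_sum_image_univ {M : Type*} [AddCommMonoid M] (g : β → M) :
    ∑ f : α → β, ∑ b ∈ univ.image f, g b =
      (card β ^ card α - (card β - 1) ^ card α) • ∑ b, g b := by
  calc ∑ f : α → β, ∑ b ∈ univ.image f, g b
      = ∑ f : α → β, ∑ b, if b ∈ univ.image f then g b else 0 := by
        simp_rw [Finset.sum_ite_mem, univ_inter]
    _ = ∑ b, ∑ f : α → β, if b ∈ univ.image f then g b else 0 := sum_comm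
    _ = ∑ b, #{f : α → β | b ∈ univ.image f} • g b := by
        simp_rw [sum_ite, sum_const_zero, add_zero, sum_const]
    _ = _ := by simp_rw [card_filter_mem_image_univ, smul_sum]

end Sampling

section Revenue

variable {N : Type} [DecidableEq N] {r : N → ℝ} {φ : N → Finset N → ℝ}

theorem revenue_nonneg (hr : ∀ i, 0 ≤ r i) (hφ : ∀ i A, 0 ≤ φ i A) (A : Finset N) :
    0 ≤ revenue r φ A :=
  sum_nonneg fun i _ => mul_nonneg (hr i) (hφ i A)

theorem sum_mul_apply_le_revenue (hr : ∀ i, 0 ≤ r i) (hφ : WeaklyRational φ)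
    {T S : Finset N} (hTS : T ⊆ S) : ∑ i ∈ T, r i * φ i S ≤ revenue r φ T :=
  sum_le_sum fun i hi => mul_le_mul_of_nonneg_left (hφ.apply_le_of_subset hi hTS) (hr i)

theorem card_pow_sub_mul_revenue_le_sum_revenue (hr : ∀ i, 0 ≤ r i) (hφ : WeaklyRational φ)
    (α : Type*) [Fintype α] [DecidableEq α] (S : Finset N) :
    ((#S ^ Fintype.card α - (#S - 1) ^ Fintype.card α : ℕ) : ℝ) * revenue r φ S ≤
      ∑ f : α → S, revenue r φ (univ.image fun a => (f a : N)) := by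
  calc ((#S ^ Fintype.card α - (#S - 1) ^ Fintype.card α : ℕ) : ℝ) * revenue r φ S
      = ∑ f : α → S, ∑ b ∈ univ.image f, r b * φ b S := by
        rw [sum_fun_sum_image_univ, Fintype.card_coe, nsmul_eq_mul, revenue,
          sum_coe_sort S fun i => r i * φ i S]
    _ = ∑ f : α → S, ∑ i ∈ univ.image fun a => (f a : N), r i * φ i S := by
        refine sum_congr rfl fun f _ => ?_
        rw [show (fun a => (f a : N)) = Subtype.val ∘ f from rfl, ← image_image,
          sum_image fun _ _ _ _ => Subtype.ext]
    _ ≤ ∑ f : α → S, revenue r φ (univ.image fun a => (f a : N)) :=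
        sum_le_sum fun f _ => sum_mul_apply_le_revenue hr hφ fun i hi => by
          obtain ⟨a, -, rfl⟩ := mem_image.mp hi
          exact (f a).2

end Revenue

theorem cast_pow_sub_pow_div_pow (n : ℕ) :
    ((n ^ n - (n - 1) ^ n : ℕ) : ℝ) / (n : ℝ) ^ n = 1 - (1 - 1 / (n : ℝ)) ^ n := by
  rcases n with _ | n
  · simp
  · have hn : (n + 1 : ℝ) ≠ 0 := n.cast_add_one_ne_zero
    rw [Nat.add_sub_cancel, Nat.cast_sub (Nat.pow_le_pow_left n.le_succ _)]
    push_cast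
    have hsub : 1 - 1 / (n + 1 : ℝ) = n / (n + 1) := by field_simp; ring
    rw [div_eq_iff (pow_ne_zero _ hn), hsub, div_pow, sub_mul,
      div_mul_cancel₀ _ (pow_ne_zero _ hn), one_mul]

theorem one_sub_inv_exp_le (n : ℕ) (hn : 1 ≤ n) :
    1 - 1 / Real.exp 1 ≤ 1 - (1 - 1 / (n : ℝ)) ^ n := by
  have := Real.one_sub_div_pow_le_exp_neg (t := 1) (n := n) (by exact_mod_cast hn)
  rw [Real.exp_neg, inv_eq_one_div] at this
  linarith

theorem stmt_1_general {N : Type} [DecidableEq N]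
    (r : N → ℝ) (φ : N → Finset N → ℝ)
    (hr : ∀ i, 0 ≤ r i)
    (hφ0 : ∀ i A, 0 ≤ φ i A)
    (hweak : ∀ (A : Finset N) (i x : N), i ∈ A → x ∉ A →
      φ i (insert x A) ≤ φ i A)
    (S : Finset N) (j : ℕ) (hcard : S.card = j) (hj : 1 ≤ j) :
    (1 / (j : ℝ) ^ j) *
        ∑ f : Fin j → {x // x ∈ S},
          revenue r φ (Finset.image (fun i => (f i : N)) Finset.univ)
      ≥ (1 - (1 - 1 / (j : ℝ)) ^ j) * revenue r φ S ∧
    (1 / (j : ℝ) ^ j) *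
        ∑ f : Fin j → {x // x ∈ S},
          revenue r φ (Finset.image (fun i => (f i : N)) Finset.univ)
      ≥ (1 - 1 / Real.exp 1) * revenue r φ S := by
  have hsample := card_pow_sub_mul_revenue_le_sum_revenue hr hweak (Fin j) S
  rw [Fintype.card_fin, hcard] at hsample
  have hbound := div_le_div_of_nonneg_right hsample (pow_nonneg j.cast_nonneg j)
  rw [mul_div_right_comm, cast_pow_sub_pow_div_pow,
    ← one_div_mul_eq_div ((j : ℝ) ^ j)] at hbound
  exact ⟨hbound,
    (mul_le_mul_of_nonneg_right (one_sub_inv_exp_le j hj) (revenue_nonneg hr hφ0 S)).trans hbound⟩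

theorem stmt_1 {N : Type} [DecidableEq N]
    (r : N → ℝ) (φ : N → Finset N → ℝ)
    (hr : ∀ i, 0 ≤ r i)
    (hφ0 : ∀ i A, 0 ≤ φ i A)
    (hφ1 : ∀ A : Finset N, ∑ i ∈ A, φ i A ≤ 1)
    (hweak : ∀ (A : Finset N) (i x : N), i ∈ A → x ∉ A →
      φ i (insert x A) ≤ φ i A)
    (S : Finset N) (j : ℕ) (hcard : S.card = j) (hj : 1 ≤ j) :
    (1 / (j : ℝ) ^ j) *
        ∑ f : Fin j → {x // x ∈ S},
          revenue r φ (Finset.image (fun i => (f i : N)) Finset.univ)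
      ≥ (1 - (1 - 1 / (j : ℝ)) ^ j) * revenue r φ S ∧
    (1 / (j : ℝ) ^ j) *
        ∑ f : Fin j → {x // x ∈ S},
          revenue r φ (Finset.image (fun i => (f i : N)) Finset.univ)
      ≥ (1 - 1 / Real.exp 1) * revenue r φ S :=
  stmt_1_general r φ hr hφ0 hweak S j hcard hj
end

section
/- Let R: 2^N → ℝ be monotone and submodular, let G be a finite set of locations, and let B be a probability distribution over subsets of G. On the ground set N × G, define for U ⊆ N × G and j ∈ G the set U(j) = {i ∈ N : (i,j) ∈ U}, and define W(U) = Σ_{L ⊆ G} P_B(L) · R(∪_{j∈L} U(j)). Then W is monotone and submodular on subsets of N × G. -/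
open Finset

/-- The set of products placed (by `U`) at some location in `L`:  ∪_{j∈L} U(j). -/
def placedProducts {N G : Type} [DecidableEq N] [DecidableEq G]
    (U : Finset (N × G)) (L : Finset G) : Finset N :=
  (U.filter (fun p => p.2 ∈ L)).image Prod.fst

lemma placed_mono {N G : Type} [DecidableEq N] [DecidableEq G]
    {U V : Finset (N × G)} (h : U ⊆ V) (L : Finset G) :
    placedProducts U L ⊆ placedProducts V L :=
  Finset.image_subset_image (Finset.filter_subset_filter _ h)

lemma placed_insert {N G : Type} [DecidableEq N] [DecidableEq G]
    (x : N × G) (U : Finset (N × G)) (L : Finset G) :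
    placedProducts (insert x U) L =
      if x.2 ∈ L then insert x.1 (placedProducts U L) else placedProducts U L := by
  unfold placedProducts
  rw [Finset.filter_insert]
  split <;> simp [Finset.image_insert]

theorem stmt_3 {N G : Type} [Fintype N] [Fintype G] [DecidableEq N] [DecidableEq G]
    (R : Finset N → ℝ)
    (hRmono : ∀ A B : Finset N, A ⊆ B → R A ≤ R B)
    (hRsub : ∀ (A B : Finset N) (x : N), A ⊆ B → x ∉ B →
      R (insert x B) - R B ≤ R (insert x A) - R A)
    (P : Finset G → ℝ)
    (hP0 : ∀ L, 0 ≤ P L)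
    (hP1 : ∑ L : Finset G, P L = 1) :
    (∀ U V : Finset (N × G), U ⊆ V →
        (∑ L : Finset G, P L * R (placedProducts U L)) ≤
          ∑ L : Finset G, P L * R (placedProducts V L)) ∧
    (∀ (U V : Finset (N × G)) (x : N × G), U ⊆ V → x ∉ V →
        (∑ L : Finset G, P L * R (placedProducts (insert x V) L)) -
            (∑ L : Finset G, P L * R (placedProducts V L)) ≤
          (∑ L : Finset G, P L * R (placedProducts (insert x U) L)) -
            (∑ L : Finset G, P L * R (placedProducts U L))) := by
  constructor
  · intro U V h
    exact Finset.sum_le_sum fun L _ =>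
      mul_le_mul_of_nonneg_left (hRmono _ _ (placed_mono h L)) (hP0 L)
  · intro U V x hUV hx
    rw [← Finset.sum_sub_distrib, ← Finset.sum_sub_distrib]
    apply Finset.sum_le_sum
    intro L _
    rw [← mul_sub, ← mul_sub]
    apply mul_le_mul_of_nonneg_left _ (hP0 L)
    by_cases hL : x.2 ∈ L
    · rw [placed_insert, placed_insert, if_pos hL, if_pos hL]
      by_cases hx1 : x.1 ∈ placedProducts V L
      · rw [Finset.insert_eq_self.2 hx1]
        have := hRmono _ _ (Finset.subset_insert x.1 (placedProducts U L))
        linarith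
      · exact hRsub _ _ _ (placed_mono hUV L) hx1
    · rw [placed_insert, placed_insert, if_neg hL, if_neg hL]
      simp
end

section
/- Let ε > 0, k a positive integer, and β₁,...,β_k ≥ 0. Then Σ_{i=1}^k β_i^{ε/(1+ε)} / (1 + Σ_{i=1}^k β_i) ≤ (ε/(1+ε)) · (k/ε)^{1/(1+ε)}, with equality when β_i = ε/k for all i. -/
open Finset

theorem stmt_6 (ε : ℝ) (hε : 0 < ε) (k : ℕ) (hk : 1 ≤ k)
    (β : Fin k → ℝ) (hβ : ∀ i, 0 ≤ β i) :
    (∑ i, (β i) ^ (ε / (1 + ε))) / (1 + ∑ i, β i) ≤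
      (ε / (1 + ε)) * ((k : ℝ) / ε) ^ (1 / (1 + ε)) ∧
    ((∀ i, β i = ε / k) →
      (∑ i, (β i) ^ (ε / (1 + ε))) / (1 + ∑ i, β i) =
        (ε / (1 + ε)) * ((k : ℝ) / ε) ^ (1 / (1 + ε))) := by
  have h1ε : (0:ℝ) < 1 + ε := by linarith
  have hkR : (0:ℝ) < k := by exact_mod_cast hk
  set p : ℝ := ε / (1 + ε) with hp
  set q : ℝ := 1 / (1 + ε) with hq
  have hc : (0:ℝ) < ε / k := div_pos hε hkR
  have hp0 : 0 ≤ p := by positivity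
  have hq0 : 0 ≤ q := by positivity
  have hpq : p + q = 1 := by rw [hp, hq]; field_simp; ring
  have hεpq : ε ^ p * ε ^ q = ε := by
    rw [← Real.rpow_add hε, hpq, Real.rpow_one]
  have hkpq : (k:ℝ) ^ p * (k:ℝ) ^ q = k := by
    rw [← Real.rpow_add hkR, hpq, Real.rpow_one]
  have hcq : (0:ℝ) < (ε / k) ^ q := Real.rpow_pos_of_pos hc q
  have hinv : ((k:ℝ) / ε) ^ q = ((ε / k) ^ q)⁻¹ := by
    rw [← Real.inv_rpow hc.le, inv_div]
  have hsumβ : 0 ≤ ∑ i, β i := Finset.sum_nonneg fun i _ => hβ i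
  have hden : (0:ℝ) < 1 + ∑ i, β i := by linarith
  -- key: k * q * (ε/k) = q * ε = p
  have hqε : q * (ε) = p := by rw [hp, hq]; ring
  have key : (∑ i, (β i) ^ p) * (ε / k) ^ q ≤ p * (1 + ∑ i, β i) := by
    have h1 : ∀ i : Fin k, (β i) ^ p * (ε / k) ^ q ≤ p * β i + q * (ε / k) := fun i =>
      Real.geom_mean_le_arith_mean2_weighted hp0 hq0 (hβ i) hc.le hpq
    calc (∑ i, (β i) ^ p) * (ε / k) ^ q = ∑ i, (β i) ^ p * (ε / k) ^ q := by
            rw [Finset.sum_mul]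
      _ ≤ ∑ i : Fin k, (p * β i + q * (ε / k)) := Finset.sum_le_sum fun i _ => h1 i
      _ = p * (∑ i, β i) + (k : ℝ) * (q * (ε / k)) := by
            rw [Finset.sum_add_distrib, ← Finset.mul_sum, Finset.sum_const, Finset.card_univ,
              Fintype.card_fin, nsmul_eq_mul]
      _ = p * (1 + ∑ i, β i) := by field_simp; ring
  constructor
  · rw [div_le_iff₀ hden]
    calc (∑ i, (β i) ^ p)
        = (∑ i, (β i) ^ p) * (ε / k) ^ q * ((ε / k) ^ q)⁻¹ := by
          field_simp
      _ ≤ p * (1 + ∑ i, β i) * ((ε / k) ^ q)⁻¹ := by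
          apply mul_le_mul_of_nonneg_right key (by positivity)
      _ = p * ((k:ℝ) / ε) ^ q * (1 + ∑ i, β i) := by rw [hinv]; ring
  · intro hβeq
    have h1 : (∑ i, β i) = ε := by
      simp [hβeq, Finset.sum_const, Finset.card_univ]
      field_simp
    have h2 : (∑ i, (β i) ^ p) = (k:ℝ) * (ε / k) ^ p := by
      simp [hβeq, Finset.sum_const, Finset.card_univ, mul_comm]
    rw [h1, h2, hinv]
    rw [Real.div_rpow hε.le hkR.le, Real.div_rpow hε.le hkR.le]
    rw [div_eq_iff (by linarith), eq_comm]
    field_simp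
    have hpε : p * (1 + ε) = ε := by rw [hp]; field_simp
    linear_combination ((k:ℝ)^q*(k:ℝ)^p)*hpε + ε*hkpq - (k:ℝ)*hεpq
end
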